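/- arXiv:1308.1015 — 3 statements merged into one kernel-verified Lean document; each statement's English description precedes it below -/
import Mathlib

section
/- For any n×n matrix A over a field F, the rank function is convex: for all m ∈ ℕ, rank(A^m) + rank(A^{m+2}) ≥ 2·rank(A^{m+1}). -/
/-! The inequality is the case `(A, A ^ m, A)` of Frobenius' rank inequality
`rank (A * B) + rank (B * C) ≤ rank B + rank (A * B * C)`. For linear maps `f, g, h` in
place of `C, B, A`, it says that `h` loses `dim (ker h ⊓ range g)` dimensions on `range g`,
and at most that many on the smaller subspace `range (g ∘ f)`. -/

open Module

theorem Submodule.finrank_map_add_finrank_ker_inf {K V W : Type*} [DivisionRing K]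
    [AddCommGroup V] [Module K V] [AddCommGroup W] [Module K W] [FiniteDimensional K V]
    (f : V →ₗ[K] W) (S : Submodule K V) :
    finrank K (S.map f) + finrank K (LinearMap.ker f ⊓ S : Submodule K V) = finrank K S := by
  have h := (f.domRestrict S).finrank_range_add_finrank_ker
  rwa [LinearMap.range_domRestrict, LinearMap.ker_domRestrict,
    ← Submodule.finrank_map_subtype_eq, Submodule.map_comap_subtype, inf_comm] at h

theorem LinearMap.finrank_range_comp_add_finrank_range_comp_le {K U V W X : Type*}
    [DivisionRing K] [AddCommGroup U] [Module K U] [AddCommGroup V] [Module K V]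
    [AddCommGroup W] [Module K W] [AddCommGroup X] [Module K X] [FiniteDimensional K W]
    (f : U →ₗ[K] V) (g : V →ₗ[K] W) (h : W →ₗ[K] X) :
    finrank K (range (h ∘ₗ g)) + finrank K (range (g ∘ₗ f)) ≤
      finrank K (range g) + finrank K (range (h ∘ₗ g ∘ₗ f)) := by
  have hg := Submodule.finrank_map_add_finrank_ker_inf h (range g)
  have hgf := Submodule.finrank_map_add_finrank_ker_inf h (range (g ∘ₗ f))
  have hker : finrank K (ker h ⊓ range (g ∘ₗ f) : Submodule K W) ≤
      finrank K (ker h ⊓ range g : Submodule K W) :=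
    Submodule.finrank_mono (inf_le_inf_left _ (range_comp_le_range f g))
  rw [range_comp g h, range_comp (g ∘ₗ f) h]
  omega

theorem Matrix.rank_mul_add_rank_mul_le {K l m n o : Type*} [Field K]
    [Fintype m] [Fintype n] [Fintype o] (A : Matrix l m K) (B : Matrix m n K) (C : Matrix n o K) :
    (A * B).rank + (B * C).rank ≤ B.rank + (A * B * C).rank := by
  have h := LinearMap.finrank_range_comp_add_finrank_range_comp_le
    C.mulVecLin B.mulVecLin A.mulVecLin
  unfold Matrix.rank
  rwa [Matrix.mulVecLin_mul, Matrix.mulVecLin_mul, Matrix.mulVecLin_mul, Matrix.mulVecLin_mul]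

theorem rank_pow_convex {F : Type*} [Field F] {n : ℕ}
    (A : Matrix (Fin n) (Fin n) F) :
    ∀ m : ℕ, (A ^ m).rank + (A ^ (m + 2)).rank ≥ 2 * (A ^ (m + 1)).rank := by
  intro m
  have h := Matrix.rank_mul_add_rank_mul_le A (A ^ m) A
  rw [← pow_succ', ← pow_succ, ← pow_succ] at h
  rw [ge_iff_le, two_mul]
  exact h
end

section
/- Suppose (A₁, ..., A_k, B) are n×n matrices over a field F of characteristic zero satisfying rank(A₁^m) + ... + rank(A_k^m) = rank(B^m) for all m ≥ 1, with stable ranks rank(A_j^n) = q_j and q = q₁ + ... + q_k ≤ n. Then rank(B^n) = q, so B is similar to C ⊕ D where D ∈ GL(q, F) and C is a nilpotent (n−q)×(n−q) matrix; moreover the nonzero Jordan blocks of C coincide (up to conjugation) with the union of all nonzero nilpotent Jordan blocks of A₁, ..., A_k. -/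
/-!
Ranks of powers of an `n × n` matrix stabilise from the exponent `n` on, so the rank equation at
`m = n + 1` gives `rank (B ^ n) = ∑ q j`. Fitting's decomposition `Fⁿ = ker Bⁿ ⊕ range Bⁿ` splits
`B`, up to similarity, into a nilpotent block `C` and an invertible block `D` of size
`rank (B ^ n)`. Hence `rank (B ^ m) = rank (C ^ m) + ∑ q j` for every `m`, and since
`q j ≤ rank (A j ^ m)`, the rank equation turns into the rank function of `C`.
-/

open Module Matrix

namespace Module.End

variable {K V : Type*} [Field K] [AddCommGroup V] [Module K V] (f : End K V)

theorem mapsTo_ker_pow (k : ℕ) :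
    ∀ x ∈ LinearMap.ker (f ^ k), f x ∈ LinearMap.ker (f ^ k) := by
  intro x hx
  rw [LinearMap.mem_ker] at hx ⊢
  rw [← mul_apply, ← pow_succ, pow_succ', mul_apply, hx, map_zero]

theorem mapsTo_range_pow (k : ℕ) :
    ∀ x ∈ LinearMap.range (f ^ k), f x ∈ LinearMap.range (f ^ k) := by
  rintro _ ⟨y, rfl⟩
  exact ⟨f y, by rw [← mul_apply, ← mul_apply, ← pow_succ, pow_succ']⟩

theorem isNilpotent_restrict_ker_pow (k : ℕ) : IsNilpotent (f.restrict (f.mapsTo_ker_pow k)) :=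
  ⟨k, by ext x; rw [pow_restrict]; exact x.2⟩

variable [FiniteDimensional K V]

theorem range_pow_eq_range_pow_finrank_of_le {m : ℕ} (hm : finrank K V ≤ m) :
    LinearMap.range (f ^ m) = LinearMap.range (f ^ finrank K V) := by
  refine Submodule.eq_of_le_of_finrank_eq ?_ ?_
  · rw [← Nat.add_sub_cancel' hm, pow_add]
    exact LinearMap.range_comp_le_range _ _
  · have h₁ := LinearMap.finrank_range_add_finrank_ker (f ^ m)
    have h₂ := LinearMap.finrank_range_add_finrank_ker (f ^ finrank K V)
    rw [ker_pow_eq_ker_pow_finrank_of_le hm] at h₁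
    omega

theorem isCompl_ker_pow_range_pow_of_finrank_le {N : ℕ} (hN : finrank K V ≤ N) :
    IsCompl (LinearMap.ker (f ^ N)) (LinearMap.range (f ^ N)) := by
  obtain ⟨M, hM⟩ := Filter.eventually_atTop.mp f.eventually_isCompl_ker_pow_range_pow
  have h := hM (max M N) (le_max_left _ _)
  rwa [ker_pow_eq_ker_pow_finrank_of_le (hN.trans (le_max_right _ _)),
    range_pow_eq_range_pow_finrank_of_le f (hN.trans (le_max_right _ _)),
    ← ker_pow_eq_ker_pow_finrank_of_le hN, ← range_pow_eq_range_pow_finrank_of_le f hN] at h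

theorem bijective_restrict_range_pow_of_finrank_le {N : ℕ} (hN : finrank K V ≤ N) :
    Function.Bijective (f.restrict (f.mapsTo_range_pow N)) := by
  have hinj : Function.Injective (f.restrict (f.mapsTo_range_pow N)) := by
    rw [← LinearMap.ker_eq_bot, eq_bot_iff]
    intro x hx
    have hfx : f x = 0 := congrArg Subtype.val hx
    have hx' : (x : V) ∈ LinearMap.ker (f ^ N) := by
      rw [ker_pow_eq_ker_pow_finrank_of_le hN]
      exact f.ker_pow_le_ker_pow_finrank 1 (by rwa [pow_one])
    have := (f.isCompl_ker_pow_range_pow_of_finrank_le hN).disjoint.le_bot ⟨hx', x.2⟩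
    exact (Submodule.mem_bot K).2 (Subtype.ext ((Submodule.mem_bot K).1 this))
  exact ⟨hinj, LinearMap.injective_iff_surjective.mp hinj⟩

end Module.End

theorem Submodule.finrank_prod {K V W : Type*} [Field K] [AddCommGroup V] [Module K V]
    [AddCommGroup W] [Module K W] (p : Submodule K V) (q : Submodule K W)
    [FiniteDimensional K p] [FiniteDimensional K q] :
    finrank K (p.prod q) = finrank K p + finrank K q := by
  have hinj : Function.Injective (p.subtype.prodMap q.subtype) :=
    Prod.map_injective.mpr ⟨p.injective_subtype, q.injective_subtype⟩
  rw [← Module.finrank_prod, ← LinearMap.finrank_range_of_inj hinj, LinearMap.range_prodMap,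
    Submodule.range_subtype, Submodule.range_subtype]

namespace Matrix

variable {K : Type*} [Field K] {ι : Type*} [Fintype ι] [DecidableEq ι]

theorem rank_pow_eq_rank_pow_card_of_le (X : Matrix ι ι K) {m : ℕ}
    (hm : Fintype.card ι ≤ m) :
    (X ^ m).rank = (X ^ Fintype.card ι).rank := by
  have hm' : finrank K (ι → K) ≤ m := by rwa [finrank_fintype_fun_eq_card]
  rw [rank, rank, ← toLin'_apply', ← toLin'_apply', toLin'_pow, toLin'_pow,
    End.range_pow_eq_range_pow_finrank_of_le _ hm', finrank_fintype_fun_eq_card]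

theorem rank_pow_card_le_rank_pow (X : Matrix ι ι K) (m : ℕ) :
    (X ^ Fintype.card ι).rank ≤ (X ^ m).rank := by
  rcases le_total m (Fintype.card ι) with hm | hm
  · rw [← Nat.add_sub_cancel' hm, pow_add]
    exact rank_mul_le_left _ _
  · rw [X.rank_pow_eq_rank_pow_card_of_le hm]

theorem rank_fromBlocks_zero₁₂_zero₂₁ {κ : Type*} [Fintype κ] [DecidableEq κ]
    (A : Matrix ι ι K) (D : Matrix κ κ K) :
    (fromBlocks A 0 0 D).rank = A.rank + D.rank := by
  let b := (Pi.basisFun K ι).prod (Pi.basisFun K κ)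
  have hblocks :
      fromBlocks A 0 0 D = LinearMap.toMatrix b b ((toLin' A).prodMap (toLin' D)) := by
    rw [LinearMap.toMatrix_prodMap, LinearMap.toMatrix_eq_toMatrix',
      LinearMap.toMatrix_eq_toMatrix', LinearMap.toMatrix'_toLin', LinearMap.toMatrix'_toLin']
  rw [rank_eq_finrank_range_toLin _ b b, hblocks, toLin_toMatrix, LinearMap.range_prodMap,
    Submodule.finrank_prod]
  rfl

theorem rank_units_conj (U : (Matrix ι ι K)ˣ) (X : Matrix ι ι K) :
    ((U⁻¹ : (Matrix ι ι K)ˣ) * X * (U : Matrix ι ι K)).rank = X.rank := by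
  rw [rank_mul_eq_left_of_isUnit_det _ _ (isUnits_det_units U),
    rank_mul_eq_right_of_isUnit_det _ _ (isUnits_det_units U⁻¹)]

theorem rank_pow_units_conj_reindex_fromBlocks {κ₁ κ₂ : Type*} [Fintype κ₁] [DecidableEq κ₁]
    [Fintype κ₂] [DecidableEq κ₂] (C : Matrix κ₁ κ₁ K) {D : Matrix κ₂ κ₂ K} (hD : IsUnit D)
    (e : κ₁ ⊕ κ₂ ≃ ι) (U : (Matrix ι ι K)ˣ) (m : ℕ) :
    (((U⁻¹ : (Matrix ι ι K)ˣ) * reindex e e (fromBlocks C 0 0 D) * (U : Matrix ι ι K)) ^ m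
      ).rank = (C ^ m).rank + Fintype.card κ₂ := by
  rw [Units.conj_pow', rank_units_conj, ← coe_reindexAlgEquiv K K, ← map_pow,
    coe_reindexAlgEquiv, rank_reindex, fromBlocks_diagonal_pow, rank_fromBlocks_zero₁₂_zero₂₁,
    rank_of_isUnit _ (hD.pow m)]

theorem exists_units_conj_reindex_toMatrix {κ : Type*} [Fintype κ] [DecidableEq κ]
    (B : Matrix ι ι K) (b : Basis κ K (ι → K)) (e : κ ≃ ι) :
    ∃ U : (Matrix ι ι K)ˣ, B = (U⁻¹ : (Matrix ι ι K)ˣ) *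
      reindex e e (LinearMap.toMatrix b b (toLin' B)) * (U : Matrix ι ι K) := by
  let b' := b.reindex e
  let std := Pi.basisFun K ι
  refine ⟨⟨b'.toMatrix std, std.toMatrix b', Basis.toMatrix_mul_toMatrix_flip _ _,
    Basis.toMatrix_mul_toMatrix_flip _ _⟩, ?_⟩
  have hreindex : LinearMap.toMatrix b' b' (toLin' B)
      = reindex e e (LinearMap.toMatrix b b (toLin' B)) := by
    ext i j
    simp [b', LinearMap.toMatrix_apply]
  change B = std.toMatrix b' * _ * b'.toMatrix std
  rw [← hreindex, basis_toMatrix_mul_linearMap_toMatrix_mul_basis_toMatrix,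
    LinearMap.toMatrix_eq_toMatrix', LinearMap.toMatrix'_toLin']

theorem exists_units_conj_reindex_fromBlocks_of_isCompl {κ₁ κ₂ : Type*} [Fintype κ₁]
    [DecidableEq κ₁] [Fintype κ₂] [DecidableEq κ₂] (B : Matrix ι ι K)
    {p q : Submodule K (ι → K)} (hpq : IsCompl p q) (hp : ∀ x ∈ p, toLin' B x ∈ p)
    (hq : ∀ x ∈ q, toLin' B x ∈ q) (b₁ : Basis κ₁ K p) (b₂ : Basis κ₂ K q) :
    ∃ (e : κ₁ ⊕ κ₂ ≃ ι) (U : (Matrix ι ι K)ˣ), B = (U⁻¹ : (Matrix ι ι K)ˣ) *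
      reindex e e (fromBlocks (LinearMap.toMatrix b₁ b₁ ((toLin' B).restrict hp)) 0 0
        (LinearMap.toMatrix b₂ b₂ ((toLin' B).restrict hq))) * (U : Matrix ι ι K) := by
  let φ := p.prodEquivOfIsCompl q hpq
  let b := (b₁.prod b₂).map φ
  have hφ : φ.symm ∘ₗ toLin' B ∘ₗ φ =
      ((toLin' B).restrict hp).prodMap ((toLin' B).restrict hq) := by
    rw [LinearEquiv.toLinearMap_symm_comp_eq]
    ext x <;> simp [φ]
  have hb : LinearMap.toMatrix b b (toLin' B) =
      fromBlocks (LinearMap.toMatrix b₁ b₁ ((toLin' B).restrict hp)) 0 0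
        (LinearMap.toMatrix b₂ b₂ ((toLin' B).restrict hq)) := by
    rw [← LinearMap.toMatrix_prodMap, ← hφ, LinearMap.toMatrix_map_left,
      LinearMap.toMatrix_map_right]
  obtain ⟨U, hU⟩ := exists_units_conj_reindex_toMatrix B b (b.indexEquiv (Pi.basisFun K ι))
  exact ⟨_, U, hb ▸ hU⟩

/-- The size `N` is a parameter so that for `ι = Fin n` the blocks are indexed by `Fin (n - r)`
and `Fin r` on the nose. -/
theorem exists_units_conj_reindex_fromBlocks_isNilpotent_isUnit (B : Matrix ι ι K) {N r : ℕ}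
    (hN : Fintype.card ι = N) (hr : (B ^ N).rank = r) :
    ∃ (C : Matrix (Fin (N - r)) (Fin (N - r)) K)
      (D : Matrix (Fin r) (Fin r) K) (e : Fin (N - r) ⊕ Fin r ≃ ι)
      (U : (Matrix ι ι K)ˣ), IsNilpotent C ∧ IsUnit D ∧
      B = (U⁻¹ : (Matrix ι ι K)ˣ) * reindex e e (fromBlocks C 0 0 D) * (U : Matrix ι ι K) := by
  set f := toLin' B
  replace hN : finrank K (ι → K) = N := (finrank_fintype_fun_eq_card K).trans hN
  have hcompl := End.isCompl_ker_pow_range_pow_of_finrank_le f hN.le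
  have hrange : finrank K (LinearMap.range (f ^ N)) = r := by
    rw [← hr, rank, ← toLin'_apply', toLin'_pow]
  have hker : finrank K (LinearMap.ker (f ^ N)) = N - r := by
    have := Submodule.finrank_add_eq_of_isCompl hcompl
    omega
  let b₁ := finBasisOfFinrankEq K _ hker
  let b₂ := finBasisOfFinrankEq K _ hrange
  obtain ⟨e, U, hU⟩ := exists_units_conj_reindex_fromBlocks_of_isCompl B hcompl
    (End.mapsTo_ker_pow f N) (End.mapsTo_range_pow f N) b₁ b₂
  refine ⟨_, _, e, U, ?_, ?_, hU⟩
  · exact (End.isNilpotent_restrict_ker_pow f N).map (LinearMap.toMatrixAlgEquiv b₁)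
  · exact ((End.isUnit_iff _).2 (End.bijective_restrict_range_pow_of_finrank_le f hN.le)).map
      (LinearMap.toMatrixAlgEquiv b₂)

end Matrix

theorem rank_equation_nonnilpotent_structure_general
    {F : Type*} [Field F] {n k : ℕ}
    (A : Fin k → Matrix (Fin n) (Fin n) F) (B : Matrix (Fin n) (Fin n) F)
    (hsol : ∀ m : ℕ, 1 ≤ m → (∑ j : Fin k, ((A j) ^ m).rank) = (B ^ m).rank)
    (q : Fin k → ℕ) (hq : ∀ j, ((A j) ^ n).rank = q j) :
    (B ^ n).rank = (∑ j : Fin k, q j) ∧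
    ∃ (C : Matrix (Fin (n - ∑ j : Fin k, q j)) (Fin (n - ∑ j : Fin k, q j)) F)
      (D : Matrix (Fin (∑ j : Fin k, q j)) (Fin (∑ j : Fin k, q j)) F)
      (e : (Fin (n - ∑ j : Fin k, q j) ⊕ Fin (∑ j : Fin k, q j)) ≃ Fin n)
      (U : (Matrix (Fin n) (Fin n) F)ˣ),
      IsNilpotent C ∧ IsUnit D ∧
      B = (U⁻¹ : (Matrix (Fin n) (Fin n) F)ˣ) *
            (Matrix.reindex e e (Matrix.fromBlocks C 0 0 D)) *
            (U : Matrix (Fin n) (Fin n) F) ∧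
      -- the nonzero nilpotent Jordan blocks of `C` coincide, up to conjugation, with the
      -- union of the nonzero nilpotent Jordan blocks of the `A j`, i.e. the rank
      -- functions of the nilpotent parts agree:
      (∀ m : ℕ, 1 ≤ m → (C ^ m).rank = ∑ j : Fin k, (((A j) ^ m).rank - q j)) := by
  have hstable : ∀ X : Matrix (Fin n) (Fin n) F, (X ^ (n + 1)).rank = (X ^ n).rank := fun X => by
    simpa using X.rank_pow_eq_rank_pow_card_of_le (m := n + 1) (by simp)
  have hBn : (B ^ n).rank = ∑ j, q j := by
    rw [← hstable, ← hsol _ n.succ_pos]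
    exact Finset.sum_congr rfl fun j _ => (hstable _).trans (hq j)
  obtain ⟨C, D, e, U, hC, hD, hBCD⟩ :=
    B.exists_units_conj_reindex_fromBlocks_isNilpotent_isUnit (Fintype.card_fin n) hBn
  refine ⟨hBn, C, D, e, U, hC, hD, hBCD, fun m hm => ?_⟩
  have hqle : ∀ j, q j ≤ ((A j) ^ m).rank := fun j => by
    simpa [hq j] using (A j).rank_pow_card_le_rank_pow m
  rw [Finset.sum_tsub_distrib _ fun j _ => hqle j, hsol m hm, hBCD,
    rank_pow_units_conj_reindex_fromBlocks C hD, Fintype.card_fin, Nat.add_sub_cancel]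

theorem rank_equation_nonnilpotent_structure
    {F : Type*} [Field F] [CharZero F] {n k : ℕ} (hn : 1 ≤ n) (hk : 1 ≤ k)
    (A : Fin k → Matrix (Fin n) (Fin n) F) (B : Matrix (Fin n) (Fin n) F)
    (hsol : ∀ m : ℕ, 1 ≤ m → (∑ j : Fin k, ((A j) ^ m).rank) = (B ^ m).rank)
    (q : Fin k → ℕ) (hq : ∀ j, ((A j) ^ n).rank = q j)
    (hqn : (∑ j : Fin k, q j) ≤ n) :
    (B ^ n).rank = (∑ j : Fin k, q j) ∧
    ∃ (C : Matrix (Fin (n - ∑ j : Fin k, q j)) (Fin (n - ∑ j : Fin k, q j)) F)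
      (D : Matrix (Fin (∑ j : Fin k, q j)) (Fin (∑ j : Fin k, q j)) F)
      (e : (Fin (n - ∑ j : Fin k, q j) ⊕ Fin (∑ j : Fin k, q j)) ≃ Fin n)
      (U : (Matrix (Fin n) (Fin n) F)ˣ),
      IsNilpotent C ∧ IsUnit D ∧
      B = (U⁻¹ : (Matrix (Fin n) (Fin n) F)ˣ) *
            (Matrix.reindex e e (Matrix.fromBlocks C 0 0 D)) *
            (U : Matrix (Fin n) (Fin n) F) ∧
      -- the nonzero nilpotent Jordan blocks of `C` coincide, up to conjugation, with the
      -- union of the nonzero nilpotent Jordan blocks of the `A j`, i.e. the rank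
      -- functions of the nilpotent parts agree:
      (∀ m : ℕ, 1 ≤ m → (C ^ m).rank = ∑ j : Fin k, (((A j) ^ m).rank - q j)) :=
  rank_equation_nonnilpotent_structure_general A B hsol q hq
end

section
/- Let f : [0,∞) → ℝ be strictly increasing, convex, with f(0) = 0 and f(ℕ) ⊆ ℕ, and let A₁, ..., A_k be arbitrary n×n matrices over a field F of characteristic zero with stable ranks q_j = rank(A_j^n). Set r(m) = Σ_j f(rank(A_j^m)). Then there exists B ∈ M_{n×n}(F) with r(m) = rank(B^m) for all m ∈ {1, ..., n} if and only if 2r(1) − r(2) ≤ n. -/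
/-!
Necessity is Sylvester's inequality `2 rank B ≤ n + rank B²`. For sufficiency, the Frobenius
rank inequality makes `m ↦ rank (A^m)` convex and nonincreasing, and composing with the
nondecreasing convex `f` and summing keeps both properties; `f` takes ℕ to ℕ, so putting `n`
in front of `r 1, r 2, …` gives a convex nonincreasing ℕ-valued sequence `t` with `t 0 = n`,
convexity at `0` being exactly `2 r(1) - r(2) ≤ n`. Every such `t` is the rank sequence of the
matrix of a partial injection of `Fin n`: fix `[0, t n)`, and move each layer
`[t (ℓ + 1), t ℓ)` into the layer below it by a shift, killing the layer `ℓ = 0`. By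
convexity the layer sizes `t ℓ - t (ℓ + 1)` decrease, so each layer fits into the one below,
the map is injective, and the domain of its `m`-th iterate is exactly `[0, t m)`.
-/

open Module Set

theorem Submodule.finrank_map_add_finrank_inf_ker {K V W : Type*} [Field K] [AddCommGroup V]
    [Module K V] [AddCommGroup W] [Module K W] (f : V →ₗ[K] W) (p : Submodule K V)
    [FiniteDimensional K p] :
    finrank K (p.map f) + finrank K (p ⊓ LinearMap.ker f : Submodule K V) = finrank K p := by
  rw [← (f.domRestrict p).finrank_range_add_finrank_ker, LinearMap.range_domRestrict,
    LinearMap.ker_domRestrict, ← Submodule.finrank_map_subtype_eq, Submodule.map_comap_subtype]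

theorem LinearMap.finrank_range_comp_add_finrank_range_comp_le_s15 {K V₀ V₁ V₂ V₃ : Type*}
    [Field K] [AddCommGroup V₀] [Module K V₀] [AddCommGroup V₁] [Module K V₁] [AddCommGroup V₂]
    [Module K V₂] [AddCommGroup V₃] [Module K V₃] [FiniteDimensional K V₂]
    (a : V₂ →ₗ[K] V₃) (b : V₁ →ₗ[K] V₂) (c : V₀ →ₗ[K] V₁) :
    finrank K (range (a ∘ₗ b)) + finrank K (range (b ∘ₗ c)) ≤
      finrank K (range b) + finrank K (range (a ∘ₗ b ∘ₗ c)) := by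
  have hb := (range b).finrank_map_add_finrank_inf_ker a
  have hbc := (range (b ∘ₗ c)).finrank_map_add_finrank_inf_ker a
  have hle : finrank K (range (b ∘ₗ c) ⊓ ker a : Submodule K V₂) ≤
      finrank K (range b ⊓ ker a : Submodule K V₂) :=
    Submodule.finrank_mono (inf_le_inf_right _ (range_comp_le_range c b))
  rw [range_comp b a, range_comp (b ∘ₗ c) a]
  omega

namespace Matrix

variable {K : Type*} [Field K]

theorem rank_mul_add_rank_mul_le_s15 {l m n o : Type*} [Fintype m] [Fintype n] [Fintype o]
    [DecidableEq n] [DecidableEq o] (A : Matrix l m K) (B : Matrix m n K) (C : Matrix n o K) :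
    (A * B).rank + (B * C).rank ≤ B.rank + (A * B * C).rank := by
  rw [rank, rank, rank, rank, mulVecLin_mul, mulVecLin_mul, mulVecLin_mul, mulVecLin_mul,
    LinearMap.comp_assoc]
  exact LinearMap.finrank_range_comp_add_finrank_range_comp_le_s15 _ _ _

variable {n : Type*} [Fintype n] [DecidableEq n]

theorem two_mul_rank_le_add_rank_sq (B : Matrix n n K) :
    2 * B.rank ≤ Fintype.card n + (B ^ 2).rank := by
  have := rank_mul_add_rank_mul_le_s15 B 1 B
  rwa [mul_one, one_mul, rank_one, ← sq, ← two_mul] at this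

theorem two_mul_rank_pow_succ_le (B : Matrix n n K) (m : ℕ) :
    2 * (B ^ (m + 1)).rank ≤ (B ^ m).rank + (B ^ (m + 2)).rank := by
  have := rank_mul_add_rank_mul_le_s15 B (B ^ m) B
  rwa [← pow_succ', ← pow_succ, ← pow_succ, ← two_mul] at this

theorem rank_pow_succ_le (B : Matrix n n K) (m : ℕ) : (B ^ (m + 1)).rank ≤ (B ^ m).rank :=
  pow_succ B m ▸ rank_mul_le_left _ _

end Matrix

namespace PEquiv

open Classical in
noncomputable def ofInjective {α β : Type*} (f : α → Option β)
    (hf : ∀ a a' b, f a = some b → f a' = some b → a = a') : α ≃. β where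
  toFun := f
  invFun b := if h : ∃ a, f a = some b then some h.choose else none
  inv a b := by
    constructor
    · intro h
      split_ifs at h with hb
      cases h
      exact hb.choose_spec
    · intro h
      have hb : ∃ a, f a = some b := ⟨a, h⟩
      rw [dif_pos hb, hf _ _ _ hb.choose_spec h]

theorem ofInjective_apply {α β : Type*} (f : α → Option β)
    (hf : ∀ a a' b, f a = some b → f a' = some b → a = a') (a : α) :
    ofInjective f hf a = f a := rfl

theorem toMatrix_ofSet {R α : Type*} [Zero R] [One R] [DecidableEq α] (s : Set α)
    [DecidablePred (· ∈ s)] :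
    ((ofSet s).toMatrix : Matrix α α R) = Matrix.diagonal fun i => if i ∈ s then 1 else 0 := by
  ext i j
  by_cases h : i = j <;> by_cases hs : i ∈ s <;> simp [ofSet, Matrix.diagonal, h, hs, eq_comm]

theorem toMatrix_iterate_trans {R α : Type*} [Semiring R] [Fintype α] [DecidableEq α]
    (f : α ≃. α) (m : ℕ) :
    ((f.trans)^[m] (PEquiv.refl α)).toMatrix = (f.toMatrix : Matrix α α R) ^ m := by
  induction m with
  | zero => simp [toMatrix_refl]
  | succ m ih => rw [Function.iterate_succ_apply', toMatrix_trans, ih, pow_succ']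

-- `P = P Q P` with `P Q` the diagonal projection onto the domain of `f`.
theorem rank_toMatrix {K m n : Type*} [Field K] [Fintype m] [Fintype n] [DecidableEq m]
    [DecidableEq n] (f : m ≃. n) :
    (f.toMatrix : Matrix m n K).rank = Fintype.card {i // (f i).isSome} := by
  classical
  set P : Matrix m n K := f.toMatrix
  set Q : Matrix n m K := f.symm.toMatrix
  have hPQ : P * Q = (f.trans f.symm).toMatrix := (toMatrix_trans _ _).symm
  have hPQP : P * Q * P = P := by
    rw [hPQ, ← toMatrix_trans]
    congr 1
    ext i j
    simp only [trans_eq_some, eq_some_iff]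
    grind
  have hle : P.rank ≤ (P * Q).rank := by
    conv_lhs => rw [← hPQP]
    exact Matrix.rank_mul_le_left _ _
  rw [le_antisymm hle (Matrix.rank_mul_le_left P Q), hPQ, self_trans_symm, toMatrix_ofSet,
    Matrix.rank_diagonal]
  simp only [ne_eq, ite_eq_right_iff, one_ne_zero, imp_false, not_not, Set.mem_ofPred_eq]

end PEquiv

namespace RankSequence

variable {t : ℕ → ℕ} {n : ℕ}

/-- For `x < n = t 0`, the largest `ℓ ≤ n` with `x < t ℓ`: so `x ∈ [t (ℓ + 1), t ℓ)` when
`ℓ < n`, and `x < t n` when `ℓ = n`. -/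
def layer (t : ℕ → ℕ) (n x : ℕ) : ℕ := Nat.findGreatest (x < t ·) n

/-- Fixes the layer `n`, kills the layer `0`, and shifts the layer `ℓ` by `t ℓ - t (ℓ + 1)`.
The bound `< n` in the guard always holds when `t` is convex and nonincreasing
(`layerShift_bounds`); it is only there to land in `Fin n`. -/
def layerShift (t : ℕ → ℕ) (n : ℕ) (x : Fin n) : Option (Fin n) :=
  if layer t n x = n then some x
  else if h : layer t n x ≠ 0 ∧ x + (t (layer t n x) - t (layer t n x + 1)) < n then
    some ⟨_, h.2⟩
  else none

theorem layer_le (x : ℕ) : layer t n x ≤ n := Nat.findGreatest_le n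

theorem lt_iff_le_layer (ht0 : t 0 = n) (ht : Antitone t) {x m : ℕ} (hx : x < n) (hm : m ≤ n) :
    x < t m ↔ m ≤ layer t n x :=
  ⟨Nat.le_findGreatest (P := (x < t ·)) hm, fun h =>
    (Nat.findGreatest_spec (P := (x < t ·)) (Nat.zero_le n) (by rwa [ht0])).trans_le (ht h)⟩

theorem layerShift_bounds (ht0 : t 0 = n) (ht : Antitone t)
    (hconv : ∀ m, 2 * t (m + 1) ≤ t m + t (m + 2)) {x : ℕ} (hx : x < n)
    (h0 : layer t n x ≠ 0) (hn : layer t n x ≠ n) :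
    t (layer t n x) ≤ x + (t (layer t n x) - t (layer t n x + 1)) ∧
      x + (t (layer t n x) - t (layer t n x + 1)) < t (layer t n x - 1) := by
  set ℓ := layer t n x
  have hle : ℓ ≤ n := layer_le x
  have hlt : x < t ℓ := (lt_iff_le_layer ht0 ht hx hle).2 le_rfl
  have hge : t (ℓ + 1) ≤ x := not_lt.1 fun h => by
    have := (lt_iff_le_layer ht0 ht hx (by omega)).1 h
    omega
  have hc := hconv (ℓ - 1)
  rw [show ℓ - 1 + 1 = ℓ by omega, show ℓ - 1 + 2 = ℓ + 1 by omega] at hc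
  have := ht (Nat.le_succ ℓ)
  omega

theorem layerShift_eq_some {x y : Fin n} (h : layerShift t n x = some y) :
    layer t n x = n ∧ y = x ∨
      layer t n x ≠ 0 ∧ layer t n x ≠ n ∧
        (y : ℕ) = x + (t (layer t n x) - t (layer t n x + 1)) := by
  unfold layerShift at h
  split_ifs at h with hn hmid <;> cases h
  · exact Or.inl ⟨hn, rfl⟩
  · exact Or.inr ⟨hmid.1, hn, rfl⟩

theorem layerShift_injective (ht0 : t 0 = n) (ht : Antitone t)
    (hconv : ∀ m, 2 * t (m + 1) ≤ t m + t (m + 2)) (x x' y : Fin n)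
    (h : layerShift t n x = some y) (h' : layerShift t n x' = some y) : x = x' := by
  have hfix : ∀ z : Fin n, layer t n z = n → (z : ℕ) < t n := fun z hz =>
    (lt_iff_le_layer ht0 ht z.2 le_rfl).2 hz.ge
  rcases layerShift_eq_some h with ⟨hx, rfl⟩ | ⟨hx0, hxn, hy⟩ <;>
    rcases layerShift_eq_some h' with ⟨hx', hyx'⟩ | ⟨hx0', hxn', hy'⟩
  · exact hyx'
  · have := hfix y hx
    have := (layerShift_bounds ht0 ht hconv x'.2 hx0' hxn').1
    have := ht (layer_le (t := t) (n := n) x')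
    omega
  · have := hfix x' hx'
    have := (layerShift_bounds ht0 ht hconv x.2 hx0 hxn).1
    have := ht (layer_le (t := t) (n := n) x)
    have := congrArg Fin.val hyx'
    omega
  · obtain ⟨hlo, hhi⟩ := layerShift_bounds ht0 ht hconv x.2 hx0 hxn
    obtain ⟨hlo', hhi'⟩ := layerShift_bounds ht0 ht hconv x'.2 hx0' hxn'
    have hℓ : layer t n x = layer t n x' := by
      by_contra hne
      rcases Nat.lt_or_gt_of_ne hne with hlt | hlt
      · have := ht (show layer t n x ≤ layer t n x' - 1 by omega)
        omega
      · have := ht (show layer t n x' ≤ layer t n x - 1 by omega)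
        omega
    rw [hℓ] at hy
    exact Fin.ext (by omega)

theorem exists_layerShift_eq_some_lt_iff (ht0 : t 0 = n) (ht : Antitone t)
    (hconv : ∀ m, 2 * t (m + 1) ≤ t m + t (m + 2)) (x : Fin n) {m : ℕ} (hm : m < n) :
    (∃ y, layerShift t n x = some y ∧ (y : ℕ) < t m) ↔ (x : ℕ) < t (m + 1) := by
  rw [lt_iff_le_layer ht0 ht x.2 hm]
  have hle : layer t n x ≤ n := layer_le x
  by_cases hn : layer t n x = n
  · simp only [layerShift, hn, if_true, Option.some.injEq, exists_eq_left']
    exact ⟨fun _ => hm, fun _ => (lt_iff_le_layer ht0 ht x.2 hm.le).2 (by omega)⟩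
  by_cases h0 : layer t n x = 0
  · have hnone : layerShift t n x = none := by
      rw [layerShift, if_neg hn, dif_neg (by simp [h0])]
    simp only [hnone, reduceCtorEq, false_and, exists_false, false_iff]
    omega
  obtain ⟨hlo, hhi⟩ := layerShift_bounds ht0 ht hconv x.2 h0 hn
  have hlt : (x : ℕ) + (t (layer t n x) - t (layer t n x + 1)) < n :=
    calc _ < t (layer t n x - 1) := hhi
      _ ≤ t 0 := ht (Nat.zero_le _)
      _ = n := ht0
  simp only [layerShift, hn, if_false, dif_pos (And.intro h0 hlt), Option.some.injEq,
    exists_eq_left']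
  constructor
  · intro h
    by_contra h'
    have := ht (show layer t n x ≤ m by omega)
    omega
  · intro h
    have := ht (show m ≤ layer t n x - 1 by omega)
    omega

theorem isSome_iterate_layerShift_iff (ht0 : t 0 = n) (ht : Antitone t)
    (hconv : ∀ m, 2 * t (m + 1) ≤ t m + t (m + 2))
    (hf : ∀ x x' y, layerShift t n x = some y → layerShift t n x' = some y → x = x')
    {m : ℕ} (hm : m ≤ n) (x : Fin n) :
    (((PEquiv.ofInjective (layerShift t n) hf).trans)^[m] (PEquiv.refl (Fin n)) x).isSome ↔
      (x : ℕ) < t m := by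
  induction m generalizing x with
  | zero => simp [ht0]
  | succ m ih =>
    rw [Function.iterate_succ_apply', ← exists_layerShift_eq_some_lt_iff ht0 ht hconv x hm]
    simp only [← ih (by omega), Option.isSome_iff_exists, PEquiv.trans_eq_some,
      PEquiv.ofInjective_apply]
    aesop

theorem exists_matrix_rank_pow_eq (K : Type*) [Field K] (ht0 : t 0 = n) (ht : Antitone t)
    (hconv : ∀ m, 2 * t (m + 1) ≤ t m + t (m + 2)) :
    ∃ B : Matrix (Fin n) (Fin n) K, ∀ m ≤ n, (B ^ m).rank = t m := by
  refine ⟨(PEquiv.ofInjective (layerShift t n) (layerShift_injective ht0 ht hconv)).toMatrix,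
    fun m hm => ?_⟩
  rw [← PEquiv.toMatrix_iterate_trans, PEquiv.rank_toMatrix, Fintype.card_subtype]
  simp only [isSome_iterate_layerShift_iff ht0 ht hconv _ hm, Fin.card_filter_val_lt]
  have := ht (Nat.zero_le m)
  omega

theorem exists_matrix_rank_pow_eq_of_two_mul_le (K : Type*) [Field K] {s : ℕ → ℕ}
    (hs : Antitone s) (hconv : ∀ m, 2 * s (m + 1) ≤ s m + s (m + 2)) (h12 : 2 * s 1 ≤ n + s 2) :
    ∃ B : Matrix (Fin n) (Fin n) K, ∀ m, 1 ≤ m → m ≤ n → (B ^ m).rank = s m := by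
  have hs12 : s 2 ≤ s 1 := hs (by norm_num)
  obtain ⟨B, hB⟩ := exists_matrix_rank_pow_eq K (t := fun m => if m = 0 then n else s m) rfl
    (antitone_nat_of_succ_le fun m => by
      rcases m with _ | m
      · show s 1 ≤ n
        omega
      · simpa using hs (Nat.le_succ (m + 1)))
    (fun m => by
      rcases m with _ | m
      · simpa using h12
      · simpa using hconv (m + 1))
  exact ⟨B, fun m h1 h2 => by rw [hB m h2, if_neg (by omega)]⟩

end RankSequence

theorem ConvexOn.two_mul_le_add_of_monotoneOn {f : ℝ → ℝ} (hconv : ConvexOn ℝ (Ici 0) f)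
    (hmono : MonotoneOn f (Ici 0)) {x y z : ℝ} (hx : 0 ≤ x) (hy : 0 ≤ y) (hz : 0 ≤ z)
    (h : 2 * y ≤ x + z) : 2 * f y ≤ f x + f z := by
  have hmid : f y ≤ f (1 / 2 * x + 1 / 2 * z) :=
    hmono hy (by simp only [mem_Ici]; positivity) (by linarith)
  have := hconv.2 hx hz (by norm_num : (0 : ℝ) ≤ 1 / 2) (by norm_num : (0 : ℝ) ≤ 1 / 2)
    (by norm_num)
  simp only [smul_eq_mul] at this
  linarith

section NatValued

variable {f : ℝ → ℝ} {g : ℕ → ℕ}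

theorem monotone_of_monotoneOn_natCast (hmono : MonotoneOn f (Ici 0))
    (hg : ∀ a : ℕ, f a = g a) : Monotone g := fun a b hab => by
  have := hmono (mem_Ici.2 (Nat.cast_nonneg' a)) (mem_Ici.2 (Nat.cast_nonneg' b))
    (Nat.cast_le.2 hab)
  rw [hg, hg] at this
  exact_mod_cast this

theorem two_mul_le_add_of_convexOn_natCast (hconv : ConvexOn ℝ (Ici 0) f)
    (hmono : MonotoneOn f (Ici 0)) (hg : ∀ a : ℕ, f a = g a) {a b c : ℕ}
    (h : 2 * b ≤ a + c) : 2 * g b ≤ g a + g c := by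
  have := hconv.two_mul_le_add_of_monotoneOn hmono (Nat.cast_nonneg' a) (Nat.cast_nonneg' b)
    (Nat.cast_nonneg' c) (by exact_mod_cast h)
  rw [hg, hg, hg] at this
  exact_mod_cast this

end NatValued

section SumRankPow

variable {ι K n : Type*} [Fintype ι] [Field K] [Fintype n] [DecidableEq n] {g : ℕ → ℕ}

theorem antitone_sum_rank_pow (hg : Monotone g) (A : ι → Matrix n n K) :
    Antitone fun m => ∑ j, g (A j ^ m).rank :=
  antitone_nat_of_succ_le fun m => Finset.sum_le_sum fun j _ => hg ((A j).rank_pow_succ_le m)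

theorem two_mul_sum_rank_pow_succ_le (hg : ∀ a b c, 2 * b ≤ a + c → 2 * g b ≤ g a + g c)
    (A : ι → Matrix n n K) (m : ℕ) :
    2 * ∑ j, g (A j ^ (m + 1)).rank ≤
      ∑ j, g (A j ^ m).rank + ∑ j, g (A j ^ (m + 2)).rank := by
  rw [Finset.mul_sum, ← Finset.sum_add_distrib]
  exact Finset.sum_le_sum fun j _ => hg _ _ _ ((A j).two_mul_rank_pow_succ_le m)

end SumRankPow

theorem rank_function_equation_general_solution_general
    {F : Type*} [Field F] {n k : ℕ} (hn : 2 ≤ n)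
    (f : ℝ → ℝ) (hmono : StrictMonoOn f (Set.Ici 0)) (hconv : ConvexOn ℝ (Set.Ici 0) f)
    (hfN : ∀ a : ℕ, ∃ b : ℕ, f a = b)
    (A : Fin k → Matrix (Fin n) (Fin n) F)
    (r : ℕ → ℝ) (hr : ∀ m, r m = ∑ j : Fin k, f (((A j) ^ m).rank : ℝ)) :
    (∃ B : Matrix (Fin n) (Fin n) F,
        ∀ m : ℕ, 1 ≤ m → m ≤ n → r m = ((B ^ m).rank : ℝ)) ↔
      2 * r 1 - r 2 ≤ (n : ℝ) := by
  constructor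
  · rintro ⟨B, hB⟩
    have hsyl : (2 * B.rank : ℝ) ≤ n + (B ^ 2).rank := by
      exact_mod_cast Fintype.card_fin n ▸ B.two_mul_rank_le_add_rank_sq
    rw [hB 1 le_rfl (by omega), hB 2 (by omega) hn, pow_one]
    linarith
  · intro h
    choose g hg using hfN
    have hrs : ∀ m, r m = ∑ j, g (A j ^ m).rank := fun m => by simp [hr, hg]
    have h12 : 2 * ∑ j, g (A j ^ 1).rank ≤ n + ∑ j, g (A j ^ 2).rank := by
      rw [hrs, hrs] at h
      exact_mod_cast (by linarith : (2 * ∑ j, g (A j ^ 1).rank : ℝ) ≤ n + ∑ j, g (A j ^ 2).rank)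
    obtain ⟨B, hB⟩ := RankSequence.exists_matrix_rank_pow_eq_of_two_mul_le F
      (antitone_sum_rank_pow (monotone_of_monotoneOn_natCast hmono.monotoneOn hg) A)
      (two_mul_sum_rank_pow_succ_le
        (fun _ _ _ => two_mul_le_add_of_convexOn_natCast hconv hmono.monotoneOn hg) A) h12
    exact ⟨B, fun m h1 h2 => by rw [hrs, hB m h1 h2]⟩

theorem rank_function_equation_general_solution
    {F : Type*} [Field F] [CharZero F] {n k : ℕ} (hn : 2 ≤ n) (hk : 2 ≤ k)
    (f : ℝ → ℝ) (hmono : StrictMonoOn f (Set.Ici 0)) (hconv : ConvexOn ℝ (Set.Ici 0) f)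
    (hf0 : f 0 = 0) (hfN : ∀ a : ℕ, ∃ b : ℕ, f a = b)
    (A : Fin k → Matrix (Fin n) (Fin n) F)
    (q : Fin k → ℕ) (hq : ∀ j, ((A j) ^ n).rank = q j)
    (r : ℕ → ℝ) (hr : ∀ m, r m = ∑ j : Fin k, f (((A j) ^ m).rank : ℝ)) :
    (∃ B : Matrix (Fin n) (Fin n) F,
        ∀ m : ℕ, 1 ≤ m → m ≤ n → r m = ((B ^ m).rank : ℝ)) ↔
      2 * r 1 - r 2 ≤ (n : ℝ) :=
  rank_function_equation_general_solution_general hn f hmono hconv hfN A r hr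
end
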